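/- Let φ : Y → ℝ^d with ‖φ(y)‖ ≤ B (B ≥ 1), and for θ in the unit ball define the log-linear distribution π_θ(y) ∝ exp(⟨φ(y), θ⟩). Then for any θ*, θ in the unit ball, E_{y∼π_{θ*}} ⟨φ(y) − E_{π_{θ*}}[φ], θ − θ*⟩² ≤ 15·B·KL(π_{θ*} ‖ π_θ). -/

import Mathlib

open scoped BigOperators Classical RealInnerProductSpace

/-- Log-linear (softmax) distribution `π_θ(y) ∝ exp⟨φ(y), θ⟩` on a finite set. -/
noncomputable def logLin {Y : Type*} [Fintype Y] {d : ℕ}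
    (φ : Y → EuclideanSpace ℝ (Fin d)) (θ : EuclideanSpace ℝ (Fin d)) (y : Y) : ℝ :=
  Real.exp ⟪φ y, θ⟫ / ∑ y', Real.exp ⟪φ y', θ⟫

lemma exp_quad (w : ℝ) (hw : -4 ≤ w) : 1 + w + w^2/8 ≤ Real.exp w := by
  rcases le_or_gt w (-2) with h | h
  · nlinarith [Real.exp_pos w, sq_nonneg (w+4)]
  · have h1 : 1 + w/2 ≤ Real.exp (w/2) := by
      have := Real.add_one_le_exp (w/2); linarith
    have h0 : (0:ℝ) ≤ 1 + w/2 := by linarith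
    have hsq : (1 + w/2)^2 ≤ Real.exp (w/2) ^ 2 := by
      exact pow_le_pow_left₀ h0 h1 2
    have : Real.exp (w/2) ^ 2 = Real.exp w := by
      rw [← Real.exp_nat_mul]; ring_nf
    nlinarith [hsq, this]

lemma log_chord (t : ℝ) (h0 : 0 ≤ t) (h2 : t ≤ 2) : 8*t/15 ≤ Real.log (1+t) := by
  have hlog3 : (16:ℝ)/15 ≤ Real.log 3 := by
    rw [Real.le_log_iff_exp_le (by norm_num)]
    have h15 : Real.exp (1/15 : ℝ) < 15/14 := by
      have h := Real.add_one_lt_exp (x := -(1/15 : ℝ)) (by norm_num)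
      have hp : (0:ℝ) < 14/15 := by norm_num
      rw [Real.exp_neg] at h
      have : (14/15 : ℝ) < (Real.exp (1/15:ℝ))⁻¹ := by linarith
      have he : 0 < Real.exp (1/15:ℝ) := Real.exp_pos _
      rw [lt_inv_comm₀ hp he] at this
      linarith
    have h1 : Real.exp 1 < 2.7182818286 := Real.exp_one_lt_d9
    have : Real.exp (16/15 : ℝ) = Real.exp 1 * Real.exp (1/15:ℝ) := by
      rw [← Real.exp_add]; norm_num
    nlinarith [Real.exp_pos (1/15:ℝ), Real.exp_pos (1:ℝ)]
  have hcc := strictConcaveOn_log_Ioi.concaveOn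
  have hcon := hcc.2 (Set.mem_Ioi.2 (one_pos)) (Set.mem_Ioi.2 (by norm_num : (0:ℝ) < 3))
    (by linarith : (0:ℝ) ≤ 1 - t/2) (by linarith : (0:ℝ) ≤ t/2)
    (by ring : (1 - t/2) + t/2 = 1)
  simp only [smul_eq_mul, Real.log_one, mul_zero, mul_one, zero_add] at hcon
  have : 1 - t/2 + t/2 * 3 = 1 + t := by ring
  rw [this] at hcon
  nlinarith [hcon, hlog3]

set_option maxHeartbeats 1000000 in
/-- Directional second-moment bound via KL for log-linear models: if `‖φ(y)‖ ≤ B`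
with `B ≥ 1` and `‖θ*‖, ‖θ‖ ≤ 1`, then
`E_{y∼π_{θ*}} ⟨φ(y) − E_{π_{θ*}}[φ], θ − θ*⟩² ≤ 15 B · KL(π_{θ*} ‖ π_θ)`. -/
theorem logLin_var_le_kl {Y : Type*} [Fintype Y] [Nonempty Y] {d : ℕ}
    (φ : Y → EuclideanSpace ℝ (Fin d)) (B : ℝ) (hB : 1 ≤ B)
    (hφ : ∀ y, ‖φ y‖ ≤ B)
    (θstar θ : EuclideanSpace ℝ (Fin d)) (hθstar : ‖θstar‖ ≤ 1) (hθ : ‖θ‖ ≤ 1) :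
    (∑ y, logLin φ θstar y *
        ⟪φ y - ∑ y', logLin φ θstar y' • φ y', θ - θstar⟫ ^ 2) ≤
      15 * B * ∑ y, logLin φ θstar y *
        Real.log (logLin φ θstar y / logLin φ θ y) := by
  have hBpos : (0:ℝ) < B := lt_of_lt_of_le one_pos hB
  have hZs_pos : 0 < ∑ y', Real.exp ⟪φ y', θstar⟫ :=
    Finset.sum_pos (fun y _ => Real.exp_pos _) Finset.univ_nonempty
  have hZ_pos : 0 < ∑ y', Real.exp ⟪φ y', θ⟫ :=
    Finset.sum_pos (fun y _ => Real.exp_pos _) Finset.univ_nonempty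
  set p : Y → ℝ := logLin φ θstar with hpdef
  set q : Y → ℝ := logLin φ θ with hqdef
  have hp_pos : ∀ y, 0 < p y := fun y => div_pos (Real.exp_pos _) hZs_pos
  have hq_pos : ∀ y, 0 < q y := fun y => div_pos (Real.exp_pos _) hZ_pos
  have hp_sum : ∑ y, p y = 1 := by
    rw [hpdef]; unfold logLin
    rw [← Finset.sum_div, div_self hZs_pos.ne']
  set m : EuclideanSpace ℝ (Fin d) := ∑ y', p y' • φ y' with hm
  set X : Y → ℝ := fun y => ⟪φ y - m, θ - θstar⟫ with hXdef
  simp only [show ∀ y, (⟪φ y - m, θ - θstar⟫ : ℝ) = X y from fun y => rfl]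
  have hXy : ∀ y, X y = ⟪φ y, θ - θstar⟫ - ⟪m, θ - θstar⟫ := by
    intro y; rw [hXdef]; simp [inner_sub_left]
  have hmI : ⟪m, θ - θstar⟫ = ∑ y, p y * ⟪φ y, θ - θstar⟫ := by
    rw [hm, sum_inner]
    exact Finset.sum_congr rfl fun y _ => real_inner_smul_left _ _ _
  -- mean zero
  have hXmean : ∑ y, p y * X y = 0 := by
    have h : ∑ y, p y * X y
        = (∑ y, p y * ⟪φ y, θ - θstar⟫) - (∑ y, p y) * ⟪m, θ - θstar⟫ := by
      rw [Finset.sum_mul, ← Finset.sum_sub_distrib]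
      refine Finset.sum_congr rfl fun y _ => ?_
      rw [hXy y]; ring
    rw [h, hp_sum, one_mul, hmI, sub_self]
  -- bound on X
  have hnm : ‖m‖ ≤ B := by
    calc ‖m‖ ≤ ∑ y, ‖p y • φ y‖ := norm_sum_le _ _
    _ = ∑ y, p y * ‖φ y‖ := by
        refine Finset.sum_congr rfl fun y _ => ?_
        rw [norm_smul, Real.norm_eq_abs, abs_of_pos (hp_pos y)]
    _ ≤ ∑ y, p y * B :=
        Finset.sum_le_sum fun y _ => mul_le_mul_of_nonneg_left (hφ y) (hp_pos y).le
    _ = B := by rw [← Finset.sum_mul, hp_sum, one_mul]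
  have hXabs : ∀ y, |X y| ≤ 4 * B := by
    intro y
    calc |X y| ≤ ‖φ y - m‖ * ‖θ - θstar‖ := abs_real_inner_le_norm _ _
    _ ≤ (2*B) * 2 := by
        apply mul_le_mul
        · calc ‖φ y - m‖ ≤ ‖φ y‖ + ‖m‖ := norm_sub_le _ _
            _ ≤ B + B := add_le_add (hφ y) hnm
            _ = 2*B := by ring
        · calc ‖θ - θstar‖ ≤ ‖θ‖ + ‖θstar‖ := norm_sub_le _ _
            _ ≤ 2 := by linarith
        · exact norm_nonneg _
        · positivity
    _ = 4*B := by ring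
  -- KL identity
  have hS : ∑ y, p y * Real.exp (X y)
      = Real.exp (-⟪m, θ - θstar⟫) *
        ((∑ y', Real.exp ⟪φ y', θ⟫) / (∑ y', Real.exp ⟪φ y', θstar⟫)) := by
    rw [Finset.sum_div, Finset.mul_sum]
    refine Finset.sum_congr rfl fun y _ => ?_
    have key : Real.exp ⟪φ y, θstar⟫ * Real.exp (X y)
        = Real.exp (-⟪m, θ - θstar⟫) * Real.exp ⟪φ y, θ⟫ := by
      rw [← Real.exp_add, ← Real.exp_add, hXy y]
      congr 1
      have h1 : ⟪φ y, θ⟫ = ⟪φ y, θstar⟫ + (⟪φ y, θ - θstar⟫ : ℝ) := by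
        rw [← inner_add_right]
        congr 1
        abel
      rw [h1]; ring
    calc p y * Real.exp (X y)
        = (Real.exp ⟪φ y, θstar⟫ * Real.exp (X y)) / (∑ y', Real.exp ⟪φ y', θstar⟫) := by
          rw [hpdef]; unfold logLin; ring
    _ = (Real.exp (-⟪m, θ - θstar⟫) * Real.exp ⟪φ y, θ⟫) / (∑ y', Real.exp ⟪φ y', θstar⟫) := by
          rw [key]
    _ = Real.exp (-⟪m, θ - θstar⟫) * (Real.exp ⟪φ y, θ⟫ / (∑ y', Real.exp ⟪φ y', θstar⟫)) := by
          ring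
  have hKL : ∑ y, p y * Real.log (p y / q y) = Real.log (∑ y, p y * Real.exp (X y)) := by
    rw [hS, Real.log_mul (Real.exp_ne_zero _) (div_pos hZ_pos hZs_pos).ne', Real.log_exp,
      Real.log_div hZ_pos.ne' hZs_pos.ne']
    have hterm : ∀ y, p y * Real.log (p y / q y)
        = p y * (-(⟪φ y, θ - θstar⟫:ℝ))
          + p y * (Real.log (∑ y', Real.exp ⟪φ y', θ⟫) - Real.log (∑ y', Real.exp ⟪φ y', θstar⟫)) := by
      intro y
      rw [Real.log_div (hp_pos y).ne' (hq_pos y).ne']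
      have hlogp : Real.log (p y) = ⟪φ y, θstar⟫ - Real.log (∑ y', Real.exp ⟪φ y', θstar⟫) := by
        rw [hpdef]; unfold logLin
        rw [Real.log_div (Real.exp_ne_zero _) hZs_pos.ne', Real.log_exp]
      have hlogq : Real.log (q y) = ⟪φ y, θ⟫ - Real.log (∑ y', Real.exp ⟪φ y', θ⟫) := by
        rw [hqdef]; unfold logLin
        rw [Real.log_div (Real.exp_ne_zero _) hZ_pos.ne', Real.log_exp]
      have hinner : (⟪φ y, θstar⟫:ℝ) - ⟪φ y, θ⟫ = -(⟪φ y, θ - θstar⟫:ℝ) := by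
        rw [inner_sub_right]; ring
      rw [hlogp, hlogq]
      linear_combination p y * hinner
    rw [Finset.sum_congr rfl (fun y _ => hterm y), Finset.sum_add_distrib, ← Finset.sum_mul]
    have h2 : ∑ y, p y * (-(⟪φ y, θ - θstar⟫:ℝ)) = -⟪m, θ - θstar⟫ := by
      rw [hmI, ← Finset.sum_neg_distrib]
      exact Finset.sum_congr rfl fun y _ => by ring
    rw [h2, hp_sum, one_mul]
  -- the variance
  set V : ℝ := ∑ y, p y * X y ^ 2 with hVdef
  have hV0 : 0 ≤ V := Finset.sum_nonneg fun y _ => mul_nonneg (hp_pos y).le (sq_nonneg _)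
  have hV16 : V ≤ 16 * B^2 := by
    calc V ≤ ∑ y, p y * (16 * B^2) := by
          refine Finset.sum_le_sum fun y _ => ?_
          have h := abs_le.1 (hXabs y)
          have : X y ^ 2 ≤ 16 * B^2 := by nlinarith [h.1, h.2]
          exact mul_le_mul_of_nonneg_left this (hp_pos y).le
    _ = 16 * B^2 := by rw [← Finset.sum_mul, hp_sum, one_mul]
  -- pointwise quadratic bound after scaling
  have hEu : 1 + V / (8*B^2) ≤ ∑ y, p y * Real.exp (X y / B) := by
    have hpt : ∀ y, 1 + X y / B + (X y / B)^2/8 ≤ Real.exp (X y / B) := by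
      intro y
      refine exp_quad _ ?_
      rw [le_div_iff₀ hBpos]
      have := (abs_le.1 (hXabs y)).1
      linarith
    have hsum_eq : ∑ y, p y * (1 + X y / B + (X y / B)^2/8) = 1 + V/(8*B^2) := by
      have hterm : ∀ y, p y * (1 + X y / B + (X y / B)^2/8)
          = p y + (p y * X y) * (1/B) + (p y * X y^2) * (1/(8*B^2)) := by
        intro y; field_simp
      rw [Finset.sum_congr rfl (fun y _ => hterm y), Finset.sum_add_distrib,
        Finset.sum_add_distrib, ← Finset.sum_mul, ← Finset.sum_mul, hp_sum, hXmean, ← hVdef]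
      field_simp
      ring
    calc 1 + V/(8*B^2) = ∑ y, p y * (1 + X y / B + (X y / B)^2/8) := hsum_eq.symm
    _ ≤ ∑ y, p y * Real.exp (X y / B) :=
        Finset.sum_le_sum fun y _ => mul_le_mul_of_nonneg_left (hpt y) (hp_pos y).le
  -- Jensen
  have hJensen : (∑ y, p y * Real.exp (X y / B)) ^ B ≤ ∑ y, p y * Real.exp (X y) := by
    have h := Real.rpow_arith_mean_le_arith_mean_rpow Finset.univ p
      (fun y => Real.exp (X y / B)) (fun y _ => (hp_pos y).le) hp_sum
      (fun y _ => (Real.exp_pos _).le) hB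
    calc (∑ y, p y * Real.exp (X y / B)) ^ B
        ≤ ∑ y, p y * Real.exp (X y / B) ^ B := h
    _ = ∑ y, p y * Real.exp (X y) := by
        refine Finset.sum_congr rfl fun y _ => ?_
        rw [← Real.exp_mul, div_mul_cancel₀ _ hBpos.ne']
  have hS_pos : 0 < ∑ y, p y * Real.exp (X y) :=
    Finset.sum_pos (fun y _ => mul_pos (hp_pos y) (Real.exp_pos _)) Finset.univ_nonempty
  -- final chain
  have ht0 : 0 ≤ V/(8*B^2) := div_nonneg hV0 (by positivity)
  have ht2 : V/(8*B^2) ≤ 2 := by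
    rw [div_le_iff₀ (by positivity)]
    linarith
  have hlog1 : B * Real.log (1 + V/(8*B^2)) ≤ Real.log (∑ y, p y * Real.exp (X y)) := by
    have hb1 : (0:ℝ) < 1 + V/(8*B^2) := by linarith
    have h1 : (1 + V/(8*B^2)) ^ B ≤ ∑ y, p y * Real.exp (X y) :=
      le_trans (Real.rpow_le_rpow hb1.le hEu hBpos.le) hJensen
    have h2 : Real.log ((1 + V/(8*B^2)) ^ B) ≤ Real.log (∑ y, p y * Real.exp (X y)) :=
      Real.log_le_log (Real.rpow_pos_of_pos hb1 B) h1
    rwa [Real.log_rpow hb1] at h2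
  have hchord := log_chord (V/(8*B^2)) ht0 ht2
  rw [hKL]
  have h3 : B * (8*(V/(8*B^2))/15) ≤ B * Real.log (1 + V/(8*B^2)) :=
    mul_le_mul_of_nonneg_left hchord hBpos.le
  have h4 : B * (8*(V/(8*B^2))/15) = V/(15*B) := by field_simp
  have h5 : V/(15*B) ≤ Real.log (∑ y, p y * Real.exp (X y)) := by
    rw [← h4]; linarith
  have h6 : V = 15*B*(V/(15*B)) := by field_simp
  calc V = 15*B*(V/(15*B)) := h6
  _ ≤ 15 * B * Real.log (∑ y, p y * Real.exp (X y)) :=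
      mul_le_mul_of_nonneg_left h5 (by positivity)
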